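/- (Exchange Dirichlet bound for invariant measures, corollary of Lemma 3.4 and identity (eq)) Let μ be a Γ/Γ_m-invariant probability measure on Z_m with density φ := dμ/dν_m. Then for every σ̄ ∈ Γ/Γ_m, ∫_{Z_m} (π_{o,σ̄o} √φ)² dν_m ≤ ( 8 d(o,σ̄o)² / (c₀ [Γ:Γ_m]) ) · I_m(μ), where d is graph distance in X_m. -/

import Mathlib

open Filter Pointwise

namespace Tower

variable {Γ : Type} [Group Γ] [DecidableEq Γ]

/-- The ball of radius `n` about the identity in the Cayley graph of `(Γ, S)`, as a `Finset`:
products of at most `n` elements of `S`. -/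
def ballF (S : Finset Γ) : ℕ → Finset Γ
  | 0 => {1}
  | n + 1 => ballF S n ∪ ballF S n * S

lemma one_mem_ballF (S : Finset Γ) (n : ℕ) : (1 : Γ) ∈ ballF S n := by
  induction n with
  | zero => simp [ballF]
  | succ n ih => exact Finset.mem_union_left _ ih

/-- The word norm of `x` with respect to `S`. -/
noncomputable def wordNorm (S : Finset Γ) (x : Γ) : ℕ := sInf {n | x ∈ ballF S n}

/-- `(F i)` is a Følner sequence for `(Γ, S)`. -/
def IsFolner (S : Finset Γ) (F : ℕ → Finset Γ) : Prop :=
  (∀ i, (F i).Nonempty) ∧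
    Tendsto (fun i => (((F i * S) \ F i).card : ℝ) / (F i).card) atTop (nhds 0)

/-- `b(K)`: the largest `i` such that `F i` is contained in the ball of radius `K` about `o`. -/
noncomputable def bFol (S : Finset Γ) (F : ℕ → Finset Γ) (K : ℝ) : ℕ :=
  sSup {i | ∀ x ∈ F i, (wordNorm S x : ℝ) ≤ K}

/-- Exchange the values of a configuration at two coordinates. -/
def exch {α : Type} [DecidableEq α] (x y : α) (η : α → Bool) : α → Bool :=
  fun z => if z = x then η y else if z = y then η x else η z

/-- Exchange of values at two coordinates, on configurations restricted to a `Finset`. -/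
def exchOn {α : Type} [DecidableEq α] (A : Finset α) (x y : α)
    (ζ : {a // a ∈ A} → Bool) : {a // a ∈ A} → Bool :=
  fun z => if (z : α) = x then (if h : y ∈ A then ζ ⟨y, h⟩ else ζ z)
    else if (z : α) = y then (if h : x ∈ A then ζ ⟨x, h⟩ else ζ z) else ζ z

/-- The type of generators. -/
abbrev Gen (S : Finset Γ) : Type _ := {s : Γ // s ∈ S}

/-- A `Γ`-invariant local function bundle for vertices `f : V × Z → ℝ` on the Cayley graph
`X = (V, E)` of `(Γ, S)`, `V = Γ`, `Z = {0,1}^V`. -/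
structure LocalBundleV (S : Finset Γ) : Type _ where
  f : Γ → (Γ → Bool) → ℝ
  r : ℕ
  localized : ∀ (x : Γ) (η η' : Γ → Bool),
    (∀ z ∈ (ballF S r).image (x * ·), η z = η' z) → f x η = f x η'
  invariant : ∀ (σ x : Γ) (η : Γ → Bool), f (σ * x) (fun z => η (σ⁻¹ * z)) = f x η

/-- A jump rate: a symmetric, non-degenerate `Γ`-invariant local function bundle for edges,
an edge being encoded as a pair `(x, s) : Γ × Gen S` with origin `x` and terminus `x * s`. -/
structure JumpRate (S : Finset Γ) : Type _ where
  c : Γ → Gen S → (Γ → Bool) → ℝ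
  c₀ : ℝ
  c₀_pos : 0 < c₀
  nondeg : ∀ x s η, c₀ ≤ c x s η
  r : ℕ
  localized : ∀ (x : Γ) (s : Gen S) (η η' : Γ → Bool),
    (∀ z ∈ (ballF S r).image (x * ·) ∪ (ballF S r).image (x * (s : Γ) * ·), η z = η' z) →
      c x s η = c x s η'
  invariant : ∀ (σ x : Γ) (s : Gen S) (η : Γ → Bool),
    c (σ * x) s (fun z => η (σ⁻¹ * z)) = c x s η
  symm_rev : ∀ (x : Γ) (s : Gen S) (h : (s : Γ)⁻¹ ∈ S) (η : Γ → Bool),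
    c (x * (s : Γ)) ⟨(s : Γ)⁻¹, h⟩ η = c x s η
  symm_exch : ∀ (x : Γ) (s : Gen S) (η : Γ → Bool),
    c x s (exch x (x * (s : Γ)) η) = c x s η

/-- `ρ`-Bernoulli weight on `{0,1}`. -/
def bw (ρ : ℝ) (b : Bool) : ℝ := if b then ρ else 1 - ρ

/-- Expectation with respect to the `ρ`-Bernoulli product measure `ν_ρ` of a cylinder function
depending only on the coordinates in the finite set `A`. -/
noncomputable def expCyl (ρ : ℝ) (A : Finset Γ) (g : (Γ → Bool) → ℝ) : ℝ :=
  ∑ ζ : ({a // a ∈ A} → Bool),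
    (∏ a : {a // a ∈ A}, bw ρ (ζ a)) *
      g (fun z => if h : z ∈ A then ζ ⟨z, h⟩ else false)

/-- The global average `⟨f_o⟩(ρ) = E_{ν_ρ}[f_o]`. -/
noncomputable def globalAvg {S : Finset Γ} (f : LocalBundleV S) (ρ : ℝ) : ℝ :=
  expCyl ρ (ballF S f.r) (f.f 1)

section Quot

variable (N : Subgroup Γ)

/-- The configuration space `Z_m = {0,1}^{V_m}` over the quotient graph `X_m = Γ_m \ X`. -/
abbrev Conf (N : Subgroup Γ) : Type _ := (Γ ⧸ N) → Bool

/-- The `Γ_m`-periodic extension of a configuration on `X_m` to `X`. -/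
def liftZ (η : Conf N) : Γ → Bool := fun x => η (QuotientGroup.mk x)

/-- The function on `V_m × Z_m` induced by a local function bundle. -/
noncomputable def fQ {S : Finset Γ} (f : LocalBundleV S) (v : Γ ⧸ N) (η : Conf N) : ℝ :=
  f.f (Quotient.out v) (liftZ N η)

/-- The jump rate induced on the quotient graph, on the edge `(v, v * s)`. -/
noncomputable def cQ {S : Finset Γ} (c : JumpRate S) (v : Γ ⧸ N) (s : Gen S) (η : Conf N) : ℝ :=
  c.c (Quotient.out v) s (liftZ N η)

variable [N.Normal]

/-- `η^e` on the quotient, for the edge `e = (v, v * s)`. -/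
def exchQ [DecidableEq (Γ ⧸ N)] (v : Γ ⧸ N) (s : Γ) (η : Conf N) : Conf N :=
  exch v (v * QuotientGroup.mk s) η

/-- The graph distance on the quotient graph `X_m`. -/
noncomputable def distQ (S : Finset Γ) (v w : Γ ⧸ N) : ℕ :=
  sInf {n | ∃ x ∈ ballF S n, v * QuotientGroup.mk x = w}

/-- The diameter of the quotient graph `X_m`. -/
noncomputable def diamQ (S : Finset Γ) : ℕ :=
  sSup {k | ∃ v w : Γ ⧸ N, distQ N S v w = k}

variable [Fintype (Γ ⧸ N)] [DecidableEq (Γ ⧸ N)]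

/-- `μ` is a probability measure on the finite configuration space `Z_m`. -/
def IsProb (μ : Conf N → ℝ) : Prop := (∀ η, 0 ≤ μ η) ∧ ∑ η, μ η = 1

/-- The action of `Γ/Γ_m` on `Z_m`. -/
def actQ (σ : Γ ⧸ N) (η : Conf N) : Conf N := fun z => η (σ⁻¹ * z)

/-- `μ` is `Γ/Γ_m`-invariant. -/
def IsInvariant (μ : Conf N → ℝ) : Prop := ∀ σ η, μ (actQ N σ η) = μ η

/-- The uniform ((1/2)-Bernoulli) measure `ν_m` on `Z_m`. -/
noncomputable def nuU : Conf N → ℝ := fun _ => (Fintype.card (Conf N) : ℝ)⁻¹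

/-- The density `φ = dμ/dν_m`. -/
noncomputable def dens (μ : Conf N → ℝ) : Conf N → ℝ :=
  fun η => (Fintype.card (Conf N) : ℝ) * μ η

/-- `√φ` where `φ = dμ/dν_m`. -/
noncomputable def sqrtDens (μ : Conf N → ℝ) : Conf N → ℝ :=
  fun η => Real.sqrt (dens N μ η)

/-- Expectation with respect to a probability measure on `Z_m`. -/
noncomputable def Emeas (μ : Conf N → ℝ) (g : Conf N → ℝ) : ℝ := ∑ η, μ η * g η

/-- The generator `L_m F (η) = Σ_{e ∈ E_m} c(e,η) (F(η^e) - F(η))`. -/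
noncomputable def Lgen {S : Finset Γ} (c : JumpRate S) (F : Conf N → ℝ) (η : Conf N) : ℝ :=
  ∑ e : (Γ ⧸ N) × Gen S, cQ N c e.1 e.2 η * (F (exchQ N e.1 (e.2 : Γ) η) - F η)

/-- The Dirichlet form `I_m(μ) = -∫ √φ L_m √φ dν_m`. -/
noncomputable def ImGen {S : Finset Γ} (c : JumpRate S) (μ : Conf N → ℝ) : ℝ :=
  - ∑ η, nuU N η * (sqrtDens N μ η * Lgen N c (sqrtDens N μ) η)

/-- The Dirichlet form in sum form:
`I_m(μ) = (1/2) Σ_{e ∈ E_m} ∫ c(e,η) (π_e √φ)² dν_m`. -/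
noncomputable def ImSum {S : Finset Γ} (c : JumpRate S) (μ : Conf N → ℝ) : ℝ :=
  (1 / 2) * ∑ e : (Γ ⧸ N) × Gen S, ∑ η, nuU N η *
    (cQ N c e.1 e.2 η * (sqrtDens N μ (exchQ N e.1 (e.2 : Γ) η) - sqrtDens N μ η) ^ 2)

/-- The local average `f̄_{v,i}` on the quotient, over the Følner set `Fi`. -/
noncomputable def fbarQ {S : Finset Γ} (f : LocalBundleV S) (Fi : Finset Γ) (v : Γ ⧸ N)
    (η : Conf N) : ℝ :=
  ((Fi.card : ℝ))⁻¹ * ∑ σ ∈ Fi, fQ N f (QuotientGroup.mk σ * v) η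

/-- The local particle density `η̄_{v,i}` on the quotient, over the Følner set `Fi`. -/
noncomputable def etabarQ (Fi : Finset Γ) (v : Γ ⧸ N) (η : Conf N) : ℝ :=
  ((Fi.card : ℝ))⁻¹ * ∑ σ ∈ Fi, (if η (QuotientGroup.mk σ * v) then (1 : ℝ) else 0)

/-- The image of `E⁰ = {e ∈ E : oe = o or te = o}` in `E_m`. -/
def E0Q (S : Finset Γ) : Finset ((Γ ⧸ N) × Gen S) :=
  Finset.univ.filter fun e => e.1 = 1 ∨ e.1 * QuotientGroup.mk (e.2 : Γ) = 1

/-- The marginal `μ|_Λ` on `Z_Λ = {0,1}^A` of a measure on `Z_m` (identified with its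
`Γ_m`-periodic extension). -/
noncomputable def marg (A : Finset Γ) (μ : Conf N → ℝ) (ζ : {a // a ∈ A} → Bool) : ℝ :=
  ∑ η : Conf N, if (∀ a : {a // a ∈ A}, liftZ N η (a : Γ) = ζ a) then μ η else 0

/-- The density `φ_Λ = d(μ|_Λ)/dν_Λ`. -/
noncomputable def margDens (A : Finset Γ) (μ : Conf N → ℝ) (ζ : {a // a ∈ A} → Bool) : ℝ :=
  (Fintype.card ({a // a ∈ A} → Bool) : ℝ) * marg N A μ ζ

/-- The restricted Dirichlet form
`I°_Λ(μ) = (1/2) Σ_{e ∈ E_Λ} ∫_{Z_Λ} (π_e √φ_Λ)² dν_Λ` for the subgraph `Λ = (A, Eset)`. -/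
noncomputable def IrestV {S : Finset Γ} (A : Finset Γ) (Eset : Finset (Γ × Gen S))
    (μ : Conf N → ℝ) : ℝ :=
  (1 / 2) * ∑ e ∈ Eset, ∑ ζ : ({a // a ∈ A} → Bool),
    (Fintype.card ({a // a ∈ A} → Bool) : ℝ)⁻¹ *
      (Real.sqrt (margDens N A μ (exchOn A e.1 (e.1 * (e.2 : Γ)) ζ)) -
        Real.sqrt (margDens N A μ ζ)) ^ 2

/-- The marginal on `Z_Λ × Z_Λ` of the pushforward `σ̂μ` of `μ` under `η ↦ (η, σ⁻¹η)`. -/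
noncomputable def margTwo (σ : Γ) (A : Finset Γ) (μ : Conf N → ℝ)
    (ζ ζ' : {a // a ∈ A} → Bool) : ℝ :=
  ∑ η : Conf N,
    if ((∀ a : {a // a ∈ A}, liftZ N η (a : Γ) = ζ a) ∧
        (∀ a : {a // a ∈ A}, liftZ N η (σ * (a : Γ)) = ζ' a)) then μ η else 0

/-- The density of `(σ̂μ)|_{Λ×Λ}` with respect to `ν_Λ ⊗ ν_Λ`. -/
noncomputable def margTwoDens (σ : Γ) (A : Finset Γ) (μ : Conf N → ℝ)
    (ζ ζ' : {a // a ∈ A} → Bool) : ℝ :=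
  ((Fintype.card ({a // a ∈ A} → Bool) : ℝ)) ^ 2 * margTwo N σ A μ ζ ζ'

/-- `I^{(o,o)}_{Λ×Λ}(σ̂μ) = (1/2) ∫ (π̃_{o,o} √(d(σ̂μ)|_{Λ×Λ}/d(ν_Λ⊗ν_Λ)))² d(ν_Λ⊗ν_Λ)`. -/
noncomputable def Ioo (σ : Γ) (A : Finset Γ) (h1 : (1 : Γ) ∈ A) (μ : Conf N → ℝ) : ℝ :=
  (1 / 2) * ∑ ζ : ({a // a ∈ A} → Bool), ∑ ζ' : ({a // a ∈ A} → Bool),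
    (((Fintype.card ({a // a ∈ A} → Bool) : ℝ)) ^ 2)⁻¹ *
      (Real.sqrt (margTwoDens N σ A μ (Function.update ζ ⟨1, h1⟩ (ζ' ⟨1, h1⟩))
          (Function.update ζ' ⟨1, h1⟩ (ζ ⟨1, h1⟩))) -
        Real.sqrt (margTwoDens N σ A μ ζ ζ')) ^ 2

/-- The two-block restricted Dirichlet form `I°_{Λ×Λ}(σ̂μ)`, i.e. the Dirichlet form of
`L°_Λ ⊗ 1 + 1 ⊗ L°_Λ` of the square root of the density of `(σ̂μ)|_{Λ×Λ}`. -/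
noncomputable def ItwoRest {S : Finset Γ} (σ : Γ) (A : Finset Γ) (Eset : Finset (Γ × Gen S))
    (μ : Conf N → ℝ) : ℝ :=
  (1 / 2) * ∑ e ∈ Eset, ∑ ζ : ({a // a ∈ A} → Bool), ∑ ζ' : ({a // a ∈ A} → Bool),
    (((Fintype.card ({a // a ∈ A} → Bool) : ℝ)) ^ 2)⁻¹ *
      ((Real.sqrt (margTwoDens N σ A μ (exchOn A e.1 (e.1 * (e.2 : Γ)) ζ) ζ') -
          Real.sqrt (margTwoDens N σ A μ ζ ζ')) ^ 2 +
        (Real.sqrt (margTwoDens N σ A μ ζ (exchOn A e.1 (e.1 * (e.2 : Γ)) ζ')) -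
          Real.sqrt (margTwoDens N σ A μ ζ ζ')) ^ 2)

end Quot

/-- The edge set `E_Λ` of the subgraph `Λ` spanned by the ball of radius `K`. -/
def ELam (S : Finset Γ) (K : ℕ) : Finset (Γ × Gen S) :=
  (ballF S K ×ˢ (Finset.univ : Finset (Gen S))).filter fun e => e.1 * (e.2 : Γ) ∈ ballF S K


/-! Write `‖π_{a,b} F‖` for the `ℓ²`-norm of `η ↦ F(η^{(a,b)}) - F(η)` over `Z_m`. Since the
transposition `(a c)` is the conjugate of `(a b)` by `(b c)`, and precomposing with a bijection of
`Z_m` preserves `ℓ²`-norms, Minkowski's inequality gives `‖π_{a,c} F‖ ≤ ‖π_{a,b} F‖ + 2 ‖π_{b,c} F‖`.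
Along a path of length `d = d(o, σ̄o)` in `X_m` this yields `‖π_{o,σ̄o} F‖ ≤ 2d max_e ‖π_e F‖`.
For `F = √φ` the exchange energy of an edge `(v, vs)` does not depend on `v`, by invariance of `μ`,
so it is at most `1/[Γ:Γ_m]` of the total over the edges labelled `s`, which non-degeneracy bounds
by `2 I_m(μ) / c₀` (after normalising by `ν_m`). -/

end Tower

namespace Tower

section WordBall

variable {Γ : Type} [Group Γ] [DecidableEq Γ]

lemma ballF_mul_subset (S : Finset Γ) (m : ℕ) :
    ∀ n, ballF S m * ballF S n ⊆ ballF S (m + n)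
  | 0 => by simp [ballF, Finset.singleton_one]
  | n + 1 => by
    rw [ballF, Finset.mul_union, ← mul_assoc, ← add_assoc, ballF]
    exact Finset.union_subset_union (ballF_mul_subset S m n)
      (Finset.mul_subset_mul (ballF_mul_subset S m n) subset_rfl)

lemma exists_mem_ballF_of_mem_closure {S : Finset Γ} {x : Γ}
    (hx : x ∈ Submonoid.closure (S : Set Γ)) : ∃ n, x ∈ ballF S n := by
  induction hx using Submonoid.closure_induction with
  | mem s hs =>
    exact ⟨1, Finset.mem_union_right _ (by simpa [ballF, Finset.singleton_one] using hs)⟩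
  | one => exact ⟨0, one_mem_ballF S 0⟩
  | mul x y _ _ hx hy =>
    obtain ⟨m, hm⟩ := hx
    obtain ⟨n, hn⟩ := hy
    exact ⟨m + n, ballF_mul_subset S m n (Finset.mul_mem_mul hm hn)⟩

/-- In a finite group the submonoid generated by `S̄` is the subgroup it generates. -/
lemma exists_mem_ballF_distQ {S : Finset Γ} (hS_gen : Subgroup.closure (S : Set Γ) = ⊤)
    (N : Subgroup Γ) [N.Normal] [Finite (Γ ⧸ N)] (σ : Γ ⧸ N) :
    ∃ x ∈ ballF S (distQ N S 1 σ), (x : Γ ⧸ N) = σ := by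
  have hσ : σ ∈ (Submonoid.closure (S : Set Γ)).map (QuotientGroup.mk' N) := by
    rw [MonoidHom.map_mclosure, ← Subgroup.closure_toSubmonoid_of_finite,
      Subgroup.mem_toSubmonoid, ← MonoidHom.map_closure, hS_gen,
      Subgroup.map_top_of_surjective _ (QuotientGroup.mk'_surjective N)]
    exact Subgroup.mem_top σ
  obtain ⟨x, hx, rfl⟩ := hσ
  obtain ⟨n, hn⟩ := exists_mem_ballF_of_mem_closure hx
  obtain ⟨y, hy, hyx⟩ := Nat.sInf_mem (s := {n | ∃ y ∈ ballF S n, (1 : Γ ⧸ N) * y = x})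
    ⟨n, x, hn, one_mul _⟩
  exact ⟨y, hy, by simpa using hyx⟩

end WordBall

section Exchange

variable {V : Type} [DecidableEq V]

lemma exch_self (x : V) (η : V → Bool) : exch x x η = η := by
  funext z
  simp only [exch]
  split_ifs with h <;> simp [h]

lemma exch_involutive (x y : V) : Function.Involutive (exch x y) := by
  intro η
  funext z
  simp only [exch]
  split_ifs <;> simp_all

lemma exch_conj {a b c : V} (hab : a ≠ b) (hbc : b ≠ c) (hac : a ≠ c) (η : V → Bool) :
    exch b c (exch a b (exch b c η)) = exch a c η := by
  funext z
  simp only [exch]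
  split_ifs <;> simp_all

lemma sqrt_sum_add_sq_le {α : Type*} [Fintype α] (u w : α → ℝ) :
    √(∑ x, (u x + w x) ^ 2) ≤ √(∑ x, u x ^ 2) + √(∑ x, w x ^ 2) := by
  simpa [EuclideanSpace.norm_eq] using norm_add_le (WithLp.toLp 2 u) (WithLp.toLp 2 w)

lemma sqrt_sum_sq_comp_sub_le {α : Type*} [Fintype α] (F : α → ℝ) (p : α → α) {q : α → α}
    (hq : q.Bijective) :
    √(∑ x, (F (p (q x)) - F x) ^ 2) ≤
      √(∑ x, (F (p x) - F x) ^ 2) + √(∑ x, (F (q x) - F x) ^ 2) := by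
  have hreindex : ∑ x, (F (p (q x)) - F (q x)) ^ 2 = ∑ x, (F (p x) - F x) ^ 2 :=
    Fintype.sum_bijective q hq _ _ fun _ => rfl
  calc √(∑ x, (F (p (q x)) - F x) ^ 2)
      = √(∑ x, ((F (p (q x)) - F (q x)) + (F (q x) - F x)) ^ 2) := by
        simp only [sub_add_sub_cancel]
    _ ≤ _ := sqrt_sum_add_sq_le _ _
    _ = _ := by rw [hreindex]

variable [Fintype V]

/-- `∫ (π_{a,b} F)² dν`, up to the normalisation of the uniform measure `ν`. -/
noncomputable def exchEnergy (F : (V → Bool) → ℝ) (a b : V) : ℝ :=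
  ∑ η, (F (exch a b η) - F η) ^ 2

lemma exchEnergy_self (F : (V → Bool) → ℝ) (a : V) : exchEnergy F a a = 0 := by
  simp [exchEnergy, exch_self]

lemma sqrt_exchEnergy_le (F : (V → Bool) → ℝ) (a b c : V) :
    √(exchEnergy F a c) ≤ √(exchEnergy F a b) + 2 * √(exchEnergy F b c) := by
  have hab := Real.sqrt_nonneg (exchEnergy F a b)
  have hbc := Real.sqrt_nonneg (exchEnergy F b c)
  by_cases hac : a = c
  · subst hac
    rw [exchEnergy_self, Real.sqrt_zero]
    positivity
  by_cases hab' : a = b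
  · subst hab'
    linarith
  by_cases hbc' : b = c
  · subst hbc'
    linarith
  calc √(exchEnergy F a c)
      = √(∑ η, (F (exch b c (exch a b (exch b c η))) - F η) ^ 2) := by
        simp only [exchEnergy, exch_conj hab' hbc' hac]
    _ ≤ √(∑ η, (F (exch b c (exch a b η)) - F η) ^ 2) + √(exchEnergy F b c) :=
        sqrt_sum_sq_comp_sub_le F (exch b c ∘ exch a b) (exch_involutive b c).bijective
    _ ≤ √(exchEnergy F b c) + √(exchEnergy F a b) + √(exchEnergy F b c) := by
        gcongr
        exact sqrt_sum_sq_comp_sub_le F (exch b c) (exch_involutive a b).bijective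
    _ = √(exchEnergy F a b) + 2 * √(exchEnergy F b c) := by ring

end Exchange

lemma cQ_nonneg {Γ : Type} [Group Γ] [DecidableEq Γ] {N : Subgroup Γ} {S : Finset Γ}
    (c : JumpRate S) (v : Γ ⧸ N) (s : Gen S) (η : Conf N) : 0 ≤ cQ N c v s η :=
  c.c₀_pos.le.trans (c.nondeg _ _ _)

section Quotient

variable {Γ : Type} [Group Γ] {N : Subgroup Γ} [N.Normal]

lemma actQ_bijective (τ : Γ ⧸ N) : Function.Bijective (actQ N τ) := by
  refine Function.bijective_iff_has_inverse.mpr ⟨actQ N τ⁻¹, fun η => ?_, fun η => ?_⟩ <;>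
  · funext z
    simp [actQ, ← mul_assoc]

lemma exch_mul_left_actQ [DecidableEq (Γ ⧸ N)] (τ a b : Γ ⧸ N) (η : Conf N) :
    exch (τ * a) (τ * b) (actQ N τ η) = actQ N τ (exch a b η) := by
  funext z
  simp only [exch, actQ, ← mul_right_inj τ⁻¹ (b := z), inv_mul_cancel_left]

variable [Fintype (Γ ⧸ N)] [DecidableEq (Γ ⧸ N)]

lemma exchEnergy_mul_left {F : Conf N → ℝ} (hF : ∀ τ η, F (actQ N τ η) = F η)
    (τ a b : Γ ⧸ N) : exchEnergy F (τ * a) (τ * b) = exchEnergy F a b :=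
  (Fintype.sum_bijective (actQ N τ) (actQ_bijective τ) _ _ fun η => by
    rw [exch_mul_left_actQ, hF, hF]).symm

lemma sqrtDens_actQ {μ : Conf N → ℝ} (hinv : IsInvariant N μ) (τ : Γ ⧸ N) (η : Conf N) :
    sqrtDens N μ (actQ N τ η) = sqrtDens N μ η := by
  simp only [sqrtDens, dens, hinv τ η]

variable [DecidableEq Γ] {S : Finset Γ}

lemma sqrt_exchEnergy_le_of_mem_ballF {F : Conf N → ℝ} {B : ℝ}
    (hB : ∀ v : Γ ⧸ N, ∀ s ∈ S, exchEnergy F v (v * s) ≤ B) :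
    ∀ {n : ℕ} {x : Γ}, x ∈ ballF S n → √(exchEnergy F 1 x) ≤ 2 * n * √B
  | 0, x, hx => by
    obtain rfl : x = 1 := Finset.mem_singleton.mp hx
    simp [exchEnergy_self]
  | n + 1, x, hx => by
    have hB' := Real.sqrt_nonneg B
    rcases Finset.mem_union.mp hx with hx | hx
    · have := sqrt_exchEnergy_le_of_mem_ballF hB hx
      push_cast
      linarith
    · obtain ⟨y, hy, s, hs, rfl⟩ := Finset.mem_mul.mp hx
      have hstep : √(exchEnergy F y (y * s)) ≤ √B := Real.sqrt_le_sqrt (hB y s hs)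
      have := sqrt_exchEnergy_le_of_mem_ballF hB hy
      calc √(exchEnergy F 1 ↑(y * s))
          ≤ √(exchEnergy F 1 y) + 2 * √(exchEnergy F y (y * s)) := by
            rw [QuotientGroup.mk_mul]
            exact sqrt_exchEnergy_le F _ _ _
        _ ≤ 2 * ↑(n + 1) * √B := by
            push_cast
            linarith

lemma ImSum_nonneg (c : JumpRate S) (μ : Conf N → ℝ) : 0 ≤ ImSum N c μ := by
  refine mul_nonneg (by norm_num) (Finset.sum_nonneg fun e _ => Finset.sum_nonneg fun η _ => ?_)
  exact mul_nonneg (by unfold nuU; positivity) (mul_nonneg (cQ_nonneg c _ _ _) (sq_nonneg _))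

lemma two_mul_card_mul_ImSum (c : JumpRate S) (μ : Conf N → ℝ) :
    2 * (Fintype.card (Conf N) : ℝ) * ImSum N c μ = ∑ e : (Γ ⧸ N) × Gen S, ∑ η,
      cQ N c e.1 e.2 η * (sqrtDens N μ (exchQ N e.1 (e.2 : Γ) η) - sqrtDens N μ η) ^ 2 := by
  have hZ : (Fintype.card (Conf N) : ℝ) ≠ 0 := by positivity
  simp only [ImSum, nuU, ← Finset.mul_sum]
  field_simp

lemma exchEnergy_edge_le (c : JumpRate S) {μ : Conf N → ℝ} (hinv : IsInvariant N μ)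
    (v : Γ ⧸ N) (s : Gen S) :
    c.c₀ * Fintype.card (Γ ⧸ N) * exchEnergy (sqrtDens N μ) v (v * (s : Γ)) ≤
      2 * Fintype.card (Conf N) * ImSum N c μ := by
  have htranslate : ∀ w : Γ ⧸ N, exchEnergy (sqrtDens N μ) w (w * (s : Γ)) =
      exchEnergy (sqrtDens N μ) v (v * (s : Γ)) := fun w => by
    simpa [← mul_assoc] using exchEnergy_mul_left (sqrtDens_actQ hinv) (w * v⁻¹) v (v * (s : Γ))
  have hnondeg : ∀ w : Γ ⧸ N, c.c₀ * exchEnergy (sqrtDens N μ) w (w * (s : Γ)) ≤ ∑ η,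
      cQ N c w s η * (sqrtDens N μ (exchQ N w (s : Γ) η) - sqrtDens N μ η) ^ 2 := fun w => by
    rw [exchEnergy, Finset.mul_sum]
    exact Finset.sum_le_sum fun η _ =>
      mul_le_mul_of_nonneg_right (c.nondeg _ _ _) (sq_nonneg _)
  rw [two_mul_card_mul_ImSum, Fintype.sum_prod_type]
  calc c.c₀ * Fintype.card (Γ ⧸ N) * exchEnergy (sqrtDens N μ) v (v * (s : Γ))
      = ∑ w : Γ ⧸ N, c.c₀ * exchEnergy (sqrtDens N μ) w (w * (s : Γ)) := by
        simp only [htranslate, Finset.sum_const, Finset.card_univ, nsmul_eq_mul]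
        ring
    _ ≤ _ := Finset.sum_le_sum fun w _ => (hnondeg w).trans <|
        Finset.single_le_sum (f := fun t : Gen S => ∑ η, cQ N c w t η *
          (sqrtDens N μ (exchQ N w (t : Γ) η) - sqrtDens N μ η) ^ 2)
          (fun t _ => Finset.sum_nonneg fun η _ => by have := cQ_nonneg c w t η; positivity)
          (Finset.mem_univ s)

end Quotient

theorem exchange_dirichlet_bound_general {Γ : Type} [Group Γ] [DecidableEq Γ]
    (S : Finset Γ)
    (hS_gen : Subgroup.closure (S : Set Γ) = ⊤)
    (N : Subgroup Γ) [N.Normal]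
    [Fintype (Γ ⧸ N)] [DecidableEq (Γ ⧸ N)]
    (c : JumpRate S) (μ : Conf N → ℝ) (hinv : IsInvariant N μ)
    (σ : Γ ⧸ N) :
    ∑ η, nuU N η * (sqrtDens N μ (exch (1 : Γ ⧸ N) σ η) - sqrtDens N μ η) ^ 2 ≤
      8 * ((distQ N S 1 σ : ℝ)) ^ 2 / (c.c₀ * (N.index : ℝ)) * ImSum N c μ := by
  set K : ℝ := (Fintype.card (Γ ⧸ N) : ℝ)
  set Z : ℝ := (Fintype.card (Conf N) : ℝ)
  set B : ℝ := 2 * Z * ImSum N c μ / (c.c₀ * K) with hBdef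
  have hc₀ := c.c₀_pos
  have hB : 0 ≤ B := by have := ImSum_nonneg c μ; positivity
  have hedge : ∀ v : Γ ⧸ N, ∀ s ∈ S, exchEnergy (sqrtDens N μ) v (v * s) ≤ B :=
    fun v s hs => by
      rw [le_div_iff₀ (by positivity)]
      linarith [exchEnergy_edge_le c hinv v ⟨s, hs⟩]
  obtain ⟨x, hx, rfl⟩ := exists_mem_ballF_distQ hS_gen N σ
  have hpath := (Real.sqrt_le_iff.mp (sqrt_exchEnergy_le_of_mem_ballF hedge hx)).2
  have hindex : (N.index : ℝ) = K := by
    rw [Subgroup.index, Nat.card_eq_fintype_card]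
  calc ∑ η, nuU N η * (sqrtDens N μ (exch 1 (x : Γ ⧸ N) η) - sqrtDens N μ η) ^ 2
      = Z⁻¹ * exchEnergy (sqrtDens N μ) 1 x := by
        simp only [nuU, exchEnergy, Finset.mul_sum]
        rfl
    _ ≤ Z⁻¹ * (2 * distQ N S 1 (x : Γ ⧸ N) * √B) ^ 2 := by gcongr
    _ = _ := by
        have hZ : Z ≠ 0 := by positivity
        have hK : K ≠ 0 := by positivity
        rw [mul_pow, Real.sq_sqrt hB, hindex, hBdef]
        field_simp
        ring

/-- **Exchange Dirichlet bound for invariant measures** (corollary of Lemma 3.4 and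
identity (eq)): for a `Γ/Γ_m`-invariant probability measure `μ` on `Z_m`,
`∫ (π_{o,σ̄o} √φ)² dν_m ≤ (8 d(o,σ̄o)² / (c₀ [Γ:Γ_m])) I_m(μ)`. -/
theorem exchange_dirichlet_bound {Γ : Type} [Group Γ] [DecidableEq Γ] [Infinite Γ]
    (S : Finset Γ) (hS_symm : ∀ s ∈ S, s⁻¹ ∈ S)
    (hS_gen : Subgroup.closure (S : Set Γ) = ⊤)
    (N : Subgroup Γ) [N.Normal] [N.FiniteIndex]
    [Fintype (Γ ⧸ N)] [DecidableEq (Γ ⧸ N)]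
    (c : JumpRate S) (μ : Conf N → ℝ) (hμ : IsProb N μ) (hinv : IsInvariant N μ)
    (σ : Γ ⧸ N) :
    ∑ η, nuU N η * (sqrtDens N μ (exch (1 : Γ ⧸ N) σ η) - sqrtDens N μ η) ^ 2 ≤
      8 * ((distQ N S 1 σ : ℝ)) ^ 2 / (c.c₀ * (N.index : ℝ)) * ImSum N c μ :=
  exchange_dirichlet_bound_general S hS_gen N c μ hinv σ

end Tower
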